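/- (Theorem 3.1, type 3 tails) Under the linear quantile regression setup with type 3 tails of index ξ < 0, there exists a vector c ∈ ℝ^d with μ_Xᵀc = 1 such that xᵀc > 0 and K(x) = (xᵀc)^{1/ξ} for every x ∈ 𝐗. -/

import Mathlib

/-!
Let `q := Fu⁻¹`. Regular variation of `Fu` at `0` with index `-1/ξ` says that `z ↦ Fu (r ^ (-ξ) * z)`
behaves like `r * Fu z`, whose generalized inverse is `r ^ ξ * q`. Tail equivalence makes `F(·|x)`
behave like `K x * Fu`, so for `r` slightly below (above) `K x` the function `F(·|x)` eventually lies
above (below) `Fu (r ^ (-ξ) * ·)` near `0`, sandwiching `F⁻¹(τ|x)` between `r ^ ξ * q τ` on both sides;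
hence `F⁻¹(τ|x) / q τ → K x ^ ξ`.

By the linear specification, `x ⬝ᵥ (γ τ / q τ) → K x ^ ξ` for every `x` in the support `Xs`. A vector
orthogonal to `Xs` is orthogonal to `μ`-almost every `x`, hence in the kernel of the positive definite
second-moment matrix, so it vanishes; thus `γ τ / q τ` converges to some `c` with `x ⬝ᵥ c = K x ^ ξ`,
and `μ_X ⬝ᵥ γ τ = q τ` gives `μ_X ⬝ᵥ c = 1`.
-/

open MeasureTheory Filter Topology Real
open scoped Pointwise Matrix

-- Junk value `0` when the set is empty or unbounded below.
noncomputable def quantile (G : ℝ → ℝ) (τ : ℝ) : ℝ := sInf {z | τ < G z}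

section Quantile

variable {G H : ℝ → ℝ} {p τ w : ℝ}

theorem Monotone.bddBelow_setOf_lt (hG : Monotone G) (hw : G w ≤ τ) :
    BddBelow {z | τ < G z} :=
  ⟨w, fun _ hz => (hG.reflect_lt (hw.trans_lt hz)).le⟩

theorem Monotone.le_quantile (hG : Monotone G) (hne : {z | τ < G z}.Nonempty) (hw : G w ≤ τ) :
    w ≤ quantile G τ :=
  le_csInf hne fun _ hz => (hG.reflect_lt (hw.trans_lt hz)).le

theorem quantile_le_quantile_of_imp {z₁ : ℝ} (hne : {z | p < G z}.Nonempty)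
    (hbdd : BddBelow {z | τ < H z}) (hlt : quantile G p < z₁)
    (himp : ∀ z < z₁, p < G z → τ < H z) : quantile H τ ≤ quantile G p := by
  refine le_of_forall_gt_imp_ge_of_dense fun w hw => ?_
  obtain ⟨z, hz, hzw⟩ := exists_lt_of_csInf_lt hne (lt_min hw hlt)
  calc quantile H τ ≤ z := csInf_le hbdd (himp z (hzw.trans_le (min_le_right _ _)) hz)
    _ ≤ w := hzw.le.trans (min_le_left _ _)

theorem quantile_comp_mul {v : ℝ} (hv : 0 < v) :
    quantile (fun z => G (v * z)) p = quantile G p / v := by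
  have hset : {z | p < G (v * z)} = v⁻¹ • {y | p < G y} := by
    ext z
    simp [Set.mem_inv_smul_set_iff₀ hv.ne']
  rw [quantile, hset, Real.sInf_smul_of_nonneg (inv_nonneg.2 hv.le), smul_eq_mul,
    inv_mul_eq_div, quantile]

end Quantile

theorem tendsto_const_mul_nhdsGT_zero {v : ℝ} (hv : 0 < v) :
    Tendsto (v * ·) (𝓝[>] 0) (𝓝[>] 0) :=
  tendsto_nhdsWithin_iff.2
    ⟨by simpa using ((continuous_const_mul v).tendsto 0).mono_left nhdsWithin_le_nhds,
      eventually_nhdsWithin_of_forall fun _ hz => mul_pos hv hz⟩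

theorem Monotone.tendsto_zero_of_tendsto_div {G : ℝ → ℝ} (hG : Monotone G) {v r : ℝ}
    (hv : 0 < v) (hr : r ≠ 1) (hreg : Tendsto (fun z => G (v * z) / G z) (𝓝[>] 0) (𝓝 r)) :
    Tendsto G (𝓝[>] 0) (𝓝 0) := by
  have hL := hG.tendsto_nhdsGT 0
  suffices hL0 : sInf (G '' Set.Ioi 0) = 0 by rwa [hL0] at hL
  by_contra hL0
  have := (hL.comp (tendsto_const_mul_nhdsGT_zero hv)).div hL hL0
  rw [div_self hL0] at this
  exact hr (tendsto_nhds_unique hreg this)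

def IsRegularlyVaryingAtZero (G : ℝ → ℝ) (α : ℝ) : Prop :=
  ∀ v > 0, Tendsto (fun z => G (v * z) / G z) (𝓝[>] 0) (𝓝 (v ^ α))

structure HasLowerEndpointZero (G : ℝ → ℝ) : Prop where
  monotone : Monotone G
  tendsto_zero : Tendsto G (𝓝[>] 0) (𝓝 0)
  pos : ∀ z > 0, 0 < G z

namespace HasLowerEndpointZero

variable {G H : ℝ → ℝ} {τ z : ℝ}

theorem nonpos (hG : HasLowerEndpointZero G) (hz : z ≤ 0) : G z ≤ 0 :=
  ge_of_tendsto hG.tendsto_zero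
    (eventually_nhdsWithin_of_forall fun _ hw => hG.monotone (hz.trans (le_of_lt hw)))

theorem pos_of_lt (hG : HasLowerEndpointZero G) (hτ : 0 ≤ τ) (h : τ < G z) : 0 < z :=
  lt_of_not_ge fun hz => (hG.nonpos hz).not_gt (hτ.trans_lt h)

theorem bddBelow (hG : HasLowerEndpointZero G) (hτ : 0 ≤ τ) : BddBelow {z | τ < G z} :=
  hG.monotone.bddBelow_setOf_lt ((hG.nonpos le_rfl).trans hτ)

theorem eventually_quantile_pos (hG : HasLowerEndpointZero G) :
    ∀ᶠ τ in 𝓝[>] 0, 0 < quantile G τ := by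
  filter_upwards [Ioo_mem_nhdsGT (hG.pos 1 one_pos)] with τ ⟨hτ, hτ1⟩
  obtain ⟨w, hwτ, hw⟩ :=
    ((hG.tendsto_zero.eventually (gt_mem_nhds hτ)).and self_mem_nhdsWithin).exists
  exact lt_of_lt_of_le hw (hG.monotone.le_quantile ⟨1, hτ1⟩ hwτ.le)

theorem tendsto_quantile (hG : HasLowerEndpointZero G) :
    Tendsto (quantile G) (𝓝[>] 0) (𝓝[>] 0) := by
  refine tendsto_nhdsWithin_iff.2 ⟨tendsto_order.2 ⟨fun a ha => ?_, fun m hm => ?_⟩,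
    hG.eventually_quantile_pos⟩
  · exact hG.eventually_quantile_pos.mono fun τ h => ha.trans h
  · filter_upwards [Ioo_mem_nhdsGT (hG.pos (m / 2) (half_pos hm))] with τ ⟨hτ, hτm⟩
    exact (csInf_le (hG.bddBelow hτ.le) hτm).trans_lt (half_lt_self hm)

theorem of_isRegularlyVaryingAtZero (hG : Monotone G) (hpos : ∀ z > 0, 0 < G z) {α : ℝ}
    (hα : 0 < α) (hreg : IsRegularlyVaryingAtZero G α) : HasLowerEndpointZero G where
  monotone := hG
  tendsto_zero := hG.tendsto_zero_of_tendsto_div (by norm_num)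
    (rpow_lt_one (by norm_num) (by norm_num) hα).ne (hreg 2⁻¹ (by norm_num))
  pos := hpos

theorem comp_mul (hG : HasLowerEndpointZero G) {v : ℝ} (hv : 0 < v) :
    HasLowerEndpointZero fun z => G (v * z) where
  monotone := hG.monotone.comp (monotone_mul_left_of_nonneg hv.le)
  tendsto_zero := hG.tendsto_zero.comp (tendsto_const_mul_nhdsGT_zero hv)
  pos _ hz := hG.pos _ (mul_pos hv hz)

theorem of_tendsto_div (hG : HasLowerEndpointZero G) (hH : Monotone H) {k : ℝ} (hk : 0 < k)
    (hHG : Tendsto (fun z => H z / G z) (𝓝[>] 0) (𝓝 k)) : HasLowerEndpointZero H where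
  monotone := hH
  tendsto_zero := by
    have h := (hHG.mul hG.tendsto_zero).congr' (eventually_nhdsWithin_of_forall
      (s := Set.Ioi 0) fun z hz => div_mul_cancel₀ (H z) (hG.pos z hz).ne')
    rwa [mul_zero] at h
  pos z hz := by
    obtain ⟨w, ⟨hw, hwz⟩, hHw⟩ :=
      (Filter.Eventually.and (Ioo_mem_nhdsGT hz) (hHG.eventually (lt_mem_nhds hk))).exists
    exact ((div_pos_iff_of_pos_right (hG.pos w hw)).1 hHw).trans_le (hH hwz.le)

theorem eventually_quantile_le (hG : HasLowerEndpointZero G) (hH : HasLowerEndpointZero H)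
    (hGH : ∀ᶠ z in 𝓝[>] 0, G z < H z) : ∀ᶠ τ in 𝓝[>] 0, quantile H τ ≤ quantile G τ := by
  obtain ⟨z₁, hz₁, hGH⟩ := (nhdsGT_basis 0).eventually_iff.1 hGH
  filter_upwards [Ioo_mem_nhdsGT (hG.pos 1 one_pos),
    (hG.tendsto_quantile.mono_right nhdsWithin_le_nhds).eventually (gt_mem_nhds hz₁)]
    with τ ⟨hτ, hτ1⟩ hlt
  exact quantile_le_quantile_of_imp ⟨1, hτ1⟩ (hH.bddBelow hτ.le) hlt
    fun z hz h => h.trans (hGH ⟨hG.pos_of_lt hτ.le h, hz⟩)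

end HasLowerEndpointZero

section RegularVariation

variable {G H : ℝ → ℝ} {ξ k r : ℝ}

theorem tendsto_div_comp_rpow_mul (hG : HasLowerEndpointZero G) (hξ : ξ ≠ 0)
    (hreg : IsRegularlyVaryingAtZero G (-1 / ξ))
    (hHG : Tendsto (fun z => H z / G z) (𝓝[>] 0) (𝓝 k)) (hr : 0 < r) :
    Tendsto (fun z => H z / G (r ^ (-ξ) * z)) (𝓝[>] 0) (𝓝 (k / r)) := by
  have hv : (r ^ (-ξ)) ^ (-1 / ξ) = r := by
    rw [← rpow_mul hr.le, show -ξ * (-1 / ξ) = 1 by field_simp, rpow_one]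
  have h := hHG.div (hreg _ (rpow_pos_of_pos hr _)) (hv.symm ▸ hr.ne')
  rw [hv] at h
  exact h.congr' (eventually_nhdsWithin_of_forall (s := Set.Ioi 0) fun z hz =>
    div_div_div_cancel_right₀ (hG.pos z hz).ne' _ _)

theorem eventually_quantile_le_rpow_mul (hG : HasLowerEndpointZero G) (hξ : ξ ≠ 0)
    (hreg : IsRegularlyVaryingAtZero G (-1 / ξ))
    (hH : HasLowerEndpointZero H) (hHG : Tendsto (fun z => H z / G z) (𝓝[>] 0) (𝓝 k))
    (hr : 0 < r) (hrk : r < k) : ∀ᶠ τ in 𝓝[>] 0, quantile H τ ≤ r ^ ξ * quantile G τ := by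
  have hGr := hG.comp_mul (rpow_pos_of_pos hr (-ξ))
  have hlt : ∀ᶠ z in 𝓝[>] 0, G (r ^ (-ξ) * z) < H z := by
    filter_upwards [(tendsto_div_comp_rpow_mul hG hξ hreg hHG hr).eventually
      (lt_mem_nhds ((one_lt_div hr).2 hrk)), self_mem_nhdsWithin] with z h hz
    exact (one_lt_div (hGr.pos z hz)).1 h
  filter_upwards [hGr.eventually_quantile_le hH hlt] with τ h
  rwa [quantile_comp_mul (rpow_pos_of_pos hr _), rpow_neg hr.le, div_inv_eq_mul, mul_comm] at h

theorem eventually_rpow_mul_le_quantile (hG : HasLowerEndpointZero G) (hξ : ξ ≠ 0)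
    (hreg : IsRegularlyVaryingAtZero G (-1 / ξ))
    (hH : HasLowerEndpointZero H) (hHG : Tendsto (fun z => H z / G z) (𝓝[>] 0) (𝓝 k))
    (hr : 0 < r) (hkr : k < r) : ∀ᶠ τ in 𝓝[>] 0, r ^ ξ * quantile G τ ≤ quantile H τ := by
  have hGr := hG.comp_mul (rpow_pos_of_pos hr (-ξ))
  have hlt : ∀ᶠ z in 𝓝[>] 0, H z < G (r ^ (-ξ) * z) := by
    filter_upwards [(tendsto_div_comp_rpow_mul hG hξ hreg hHG hr).eventually
      (gt_mem_nhds ((div_lt_one hr).2 hkr)), self_mem_nhdsWithin] with z h hz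
    exact (div_lt_one (hGr.pos z hz)).1 h
  filter_upwards [hH.eventually_quantile_le hGr hlt] with τ h
  rwa [quantile_comp_mul (rpow_pos_of_pos hr _), rpow_neg hr.le, div_inv_eq_mul, mul_comm] at h

theorem tendsto_quantile_div_quantile (hG : HasLowerEndpointZero G) (hξ : ξ ≠ 0)
    (hreg : IsRegularlyVaryingAtZero G (-1 / ξ))
    (hH : Monotone H) (hk : 0 < k) (hHG : Tendsto (fun z => H z / G z) (𝓝[>] 0) (𝓝 k)) :
    Tendsto (fun τ => quantile H τ / quantile G τ) (𝓝[>] 0) (𝓝 (k ^ ξ)) := by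
  have hH' := hG.of_tendsto_div hH hk hHG
  have hcont : Tendsto (· ^ ξ) (𝓝 k) (𝓝 (k ^ ξ)) :=
    (continuousAt_rpow_const k ξ (Or.inl hk.ne')).tendsto
  refine tendsto_order.2 ⟨fun l hl => ?_, fun u hu => ?_⟩
  · obtain ⟨r, hlr, hkr⟩ := (((hcont.mono_left nhdsWithin_le_nhds).eventually
      (lt_mem_nhds hl)).and (self_mem_nhdsWithin : ∀ᶠ r in 𝓝[>] k, k < r)).exists
    filter_upwards [eventually_rpow_mul_le_quantile hG hξ hreg hH' hHG (hk.trans hkr) hkr,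
      hG.eventually_quantile_pos] with τ h hq
    exact hlr.trans_le ((le_div_iff₀ hq).2 h)
  · obtain ⟨r, hru, hrk, hr⟩ := (((hcont.mono_left nhdsWithin_le_nhds).eventually
      (gt_mem_nhds hu)).and (Filter.Eventually.and (self_mem_nhdsWithin : ∀ᶠ r in 𝓝[<] k, r < k)
      ((lt_mem_nhds hk).filter_mono nhdsWithin_le_nhds))).exists
    filter_upwards [eventually_quantile_le_rpow_mul hG hξ hreg hH' hHG hr hrk,
      hG.eventually_quantile_pos] with τ h hq
    exact ((div_le_iff₀ hq).2 h).trans_lt hru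

end RegularVariation

theorem exists_tendsto_of_forall_tendsto_dotProduct {ι α : Type*} [Fintype ι]
    {S : Set (ι → ℝ)} (hS : ∀ w, (∀ x ∈ S, x ⬝ᵥ w = 0) → w = 0) {l : Filter α} [l.NeBot]
    {f : α → ι → ℝ} {κ : (ι → ℝ) → ℝ} (h : ∀ x ∈ S, Tendsto (fun a => x ⬝ᵥ f a) l (𝓝 (κ x))) :
    ∃ c, Tendsto f l (𝓝 c) ∧ ∀ x ∈ S, x ⬝ᵥ c = κ x := by
  let L := Matrix.mulVecLin (Matrix.of fun (x : S) i => (x : ι → ℝ) i)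
  have hL : IsClosedEmbedding L := LinearMap.isClosedEmbedding_of_injective
    (LinearMap.ker_eq_bot'.2 fun w hw => hS w fun x hx => congr_fun hw ⟨x, hx⟩)
  have hLf : Tendsto (fun a => L (f a)) l (𝓝 fun x : S => κ x) :=
    tendsto_pi_nhds.2 fun x => h x x.2
  obtain ⟨c, hc⟩ : (fun x : S => κ x) ∈ Set.range L :=
    hL.isClosed_range.mem_of_tendsto hLf (Eventually.of_forall fun a => ⟨f a, rfl⟩)
  exact ⟨c, hL.tendsto_nhds_iff.2 (hc ▸ hLf), fun x hx => congr_fun hc ⟨x, hx⟩⟩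

theorem integrable_mul_apply_of_isCompact {ι : Type*} [Fintype ι] {μ : Measure (ι → ℝ)}
    [IsFiniteMeasure μ] {S : Set (ι → ℝ)} (hS : IsCompact S) (hae : ∀ᵐ x ∂μ, x ∈ S) (i j : ι) :
    Integrable (fun x : ι → ℝ => x i * x j) μ := by
  rw [← Measure.restrict_eq_self_of_ae_mem hae]
  exact ContinuousOn.integrableOn_compact hS (by fun_prop)

theorem eq_zero_of_ae_dotProduct_eq_zero {ι : Type*} [Fintype ι] {μ : Measure (ι → ℝ)}
    (hint : ∀ i j, Integrable (fun x : ι → ℝ => x i * x j) μ)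
    (hpd : (Matrix.of fun i j => ∫ x, x i * x j ∂μ).PosDef) {w : ι → ℝ}
    (hw : ∀ᵐ x ∂μ, x ⬝ᵥ w = 0) : w = 0 := by
  have hAw : (Matrix.of fun i j => ∫ x, x i * x j ∂μ) *ᵥ w = 0 := by
    ext i
    calc ∑ j, (∫ x, x i * x j ∂μ) * w j = ∫ x, x i * (x ⬝ᵥ w) ∂μ := by
          simp only [dotProduct, Finset.mul_sum, ← mul_assoc]
          rw [integral_finsetSum _ fun j _ => (hint i j).mul_const _]
          simp only [integral_mul_const]
      _ = 0 := integral_eq_zero_of_ae (hw.mono fun x hx => by simp [hx])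
  by_contra hw0
  simpa [hAw] using hpd.dotProduct_mulVec_pos hw0

theorem extremal_qr_thm31_type3_general
    (d : ℕ)
    (μ : Measure (Fin d → ℝ)) [IsProbabilityMeasure μ]
    (Xs : Set (Fin d → ℝ))
    (hXssupp : ∀ x, x ∈ Xs ↔ ∀ U ∈ 𝓝 x, 0 < μ U)
    (hXscpt : IsCompact Xs)
    (hposdef : (Matrix.of fun i j : Fin d => ∫ x, x i * x j ∂μ).PosDef)
    (η : ℝ) (hη : η ∈ Set.Ioc (0:ℝ) 1)
    (γ : ℝ → Fin d → ℝ)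
    (F : (Fin d → ℝ) → ℝ → ℝ)
    (hFmono : ∀ x ∈ Xs, Monotone (F x))
    (hlin : ∀ τ ∈ Set.Ioc (0:ℝ) η, ∀ x ∈ Xs, sInf {z | τ < F x z} = ∑ i, x i * γ τ i)
    (Fu : ℝ → ℝ)
    (hFumono : Monotone Fu)
    (hFuinv : ∀ τ ∈ Set.Ioc (0:ℝ) η, sInf {z | τ < Fu z} = ∑ i, (∫ x, x i ∂μ) * γ τ i)
    (K : (Fin d → ℝ) → ℝ)
    (hKpos : ∀ x ∈ Xs, 0 < K x)
    (ξ : ℝ) (hξ : ξ < 0)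
    (hFupos : ∀ z > (0:ℝ), 0 < Fu z)
    (hreg : ∀ v > (0:ℝ), Tendsto (fun z => Fu (v * z) / Fu z) (𝓝[>] (0:ℝ)) (𝓝 (v ^ (-1/ξ))))
    (htaileq : TendstoUniformlyOn (fun z x => F x z / Fu z) K (𝓝[>] (0:ℝ)) Xs)
    :
    ∃ c : Fin d → ℝ, (∑ i, (∫ x, x i ∂μ) * c i) = 1 ∧
      (∀ x ∈ Xs, 0 < (∑ i, x i * c i) ∧ K x = (∑ i, x i * c i) ^ (1/ξ)) := by
  have hFu := HasLowerEndpointZero.of_isRegularlyVaryingAtZero hFumono hFupos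
    (div_pos_of_neg_of_neg (by norm_num) hξ) hreg
  have hae : ∀ᵐ x ∂μ, x ∈ Xs := by
    rw [show Xs = μ.support from
      Set.ext fun x => (hXssupp x).trans (μ.mem_support_iff_forall x).symm]
    exact μ.support_mem_ae
  have hperp : ∀ w, (∀ x ∈ Xs, x ⬝ᵥ w = 0) → w = 0 := fun w hw =>
    eq_zero_of_ae_dotProduct_eq_zero (integrable_mul_apply_of_isCompact hXscpt hae) hposdef
      (hae.mono hw)
  have hsmall : ∀ᶠ τ in 𝓝[>] 0, τ ∈ Set.Ioc 0 η ∧ 0 < quantile Fu τ :=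
    Filter.Eventually.and (Ioc_mem_nhdsGT hη.1) hFu.eventually_quantile_pos
  obtain ⟨c, hc, hcXs⟩ := exists_tendsto_of_forall_tendsto_dotProduct hperp
    (f := fun τ => (quantile Fu τ)⁻¹ • γ τ) fun x hx =>
      (tendsto_quantile_div_quantile hFu hξ.ne hreg (hFmono x hx) (hKpos x hx)
        (htaileq.tendsto_at hx)).congr' (hsmall.mono fun τ hτ => by
          have hq : quantile (F x) τ = x ⬝ᵥ γ τ := hlin τ hτ.1 x hx
          show _ = x ⬝ᵥ ((quantile Fu τ)⁻¹ • γ τ)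
          rw [dotProduct_smul, smul_eq_mul, inv_mul_eq_div, hq])
  refine ⟨c, ?_, fun x hx => ?_⟩
  · refine tendsto_nhds_unique_of_eventuallyEq
      (((continuous_const.dotProduct continuous_id).tendsto c).comp hc) tendsto_const_nhds
      (hsmall.mono fun τ hτ => ?_)
    have hq : quantile Fu τ = (fun i => ∫ x, x i ∂μ) ⬝ᵥ γ τ := hFuinv τ hτ.1
    show (fun i => ∫ x, x i ∂μ) ⬝ᵥ ((quantile Fu τ)⁻¹ • γ τ) = 1
    rw [dotProduct_smul, smul_eq_mul, ← hq, inv_mul_cancel₀ hτ.2.ne']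
  · change 0 < x ⬝ᵥ c ∧ K x = (x ⬝ᵥ c) ^ (1 / ξ)
    rw [hcXs x hx, one_div, rpow_rpow_inv (hKpos x hx).le hξ.ne]
    exact ⟨rpow_pos_of_pos (hKpos x hx) _, rfl⟩

theorem extremal_qr_thm31_type3
    (d : ℕ) (hd : 1 ≤ d)
    (μ : Measure (Fin d → ℝ)) [IsProbabilityMeasure μ]
    (Xs : Set (Fin d → ℝ))
    (hXssupp : ∀ x, x ∈ Xs ↔ ∀ U ∈ 𝓝 x, 0 < μ U)
    (hXscpt : IsCompact Xs)
    (hposdef : (Matrix.of fun i j : Fin d => ∫ x, x i * x j ∂μ).PosDef)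
    (hmean : ∀ i : Fin d, (∫ x, x i ∂μ) = if (i : ℕ) = 0 then (1:ℝ) else 0)
    (η : ℝ) (hη : η ∈ Set.Ioc (0:ℝ) 1)
    (γ : ℝ → Fin d → ℝ)
    (F : (Fin d → ℝ) → ℝ → ℝ)
    (hFmono : ∀ x ∈ Xs, Monotone (F x))
    (hFrc : ∀ x ∈ Xs, ∀ z : ℝ, ContinuousWithinAt (F x) (Set.Ici z) z)
    (hFrange : ∀ x ∈ Xs, ∀ z : ℝ, F x z ∈ Set.Icc (0:ℝ) 1)
    (hlin : ∀ τ ∈ Set.Ioc (0:ℝ) η, ∀ x ∈ Xs, sInf {z | τ < F x z} = ∑ i, x i * γ τ i)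
    (Fu : ℝ → ℝ)
    (hFumono : Monotone Fu)
    (hFurc : ∀ z : ℝ, ContinuousWithinAt Fu (Set.Ici z) z)
    (hFurange : ∀ z : ℝ, Fu z ∈ Set.Icc (0:ℝ) 1)
    (hFuinv : ∀ τ ∈ Set.Ioc (0:ℝ) η, sInf {z | τ < Fu z} = ∑ i, (∫ x, x i ∂μ) * γ τ i)
    (K : (Fin d → ℝ) → ℝ)
    (hKcont : ContinuousOn K Xs)
    (hKbdd : BddAbove (K '' Xs))
    (hKpos : ∀ x ∈ Xs, 0 < K x)
    (ξ : ℝ) (hξ : ξ < 0)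
    (hFu0 : ∀ z < (0:ℝ), Fu z = 0)
    (hFupos : ∀ z > (0:ℝ), 0 < Fu z)
    (hreg : ∀ v > (0:ℝ), Tendsto (fun z => Fu (v * z) / Fu z) (𝓝[>] (0:ℝ)) (𝓝 (v ^ (-1/ξ))))
    (htaileq : TendstoUniformlyOn (fun z x => F x z / Fu z) K (𝓝[>] (0:ℝ)) Xs)
    :
    ∃ c : Fin d → ℝ, (∑ i, (∫ x, x i ∂μ) * c i) = 1 ∧
      (∀ x ∈ Xs, 0 < (∑ i, x i * c i) ∧ K x = (∑ i, x i * c i) ^ (1/ξ)) :=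
  extremal_qr_thm31_type3_general d μ Xs hXssupp hXscpt hposdef η hη γ F hFmono hlin Fu hFumono
    hFuinv K hKpos ξ hξ hFupos hreg htaileq
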